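/- arXiv:1705.06416 — 2 statements merged into one kernel-verified Lean document; each statement's English description precedes it below -/
import Mathlib

section
/- Let Γ be a finite simplicial graph and let L = A ⋆ K and L' = A' ⋆ K' be two distinct strip subgraphs of Γ (so A and A' are pairs of non-adjacent vertices and K, K' are nonempty cliques). Then A ≠ A'. In other words, a pair of non-adjacent vertices of Γ is the non-clique factor of at most one strip subgraph of Γ. -/
/-!
If `A ⋆ K` is a strip and a vertex `v` outside it is adjacent to both vertices of `A`, then
`A ⋆ (K ∪ {v})` is either a larger strip (when `v` is adjacent to all of `K`) or a wide join
(when `v` misses some `k ∈ K`, giving the non-adjacent pair `{v, k}`), and either contradicts the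
maximality of the strip. So every strip `A ⋆ K'` with the same pair `A` lies inside `A ⋆ K`, and
maximality of strips forces the two to coincide.
-/

open Relation

variable {V : Type*}

/-- Relators of the right-angled Coxeter group of a simplicial graph. -/
def racgRels (G : SimpleGraph V) : Set (FreeGroup V) :=
  {r | (∃ v, r = FreeGroup.of v * FreeGroup.of v) ∨
       (∃ v w, G.Adj v w ∧
          r = FreeGroup.of v * FreeGroup.of w * FreeGroup.of v * FreeGroup.of w)}

/-- The right-angled Coxeter group `W_Γ` of a simplicial graph `Γ`. -/
abbrev RACG (G : SimpleGraph V) := PresentedGroup (racgRels G)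

/-- The generator of `W_Γ` corresponding to a vertex. -/
def racgGen (G : SimpleGraph V) (v : V) : RACG G := PresentedGroup.of v

/-- Word length with respect to the vertex generators. -/
noncomputable def wordLength (G : SimpleGraph V) (g : RACG G) : ℕ :=
  sInf {n | ∃ l : List V, l.length = n ∧ (l.map (racgGen G)).prod = g}

/-- Word metric on `W_Γ`. -/
noncomputable def wdist (G : SimpleGraph V) (g h : RACG G) : ℕ :=
  wordLength G (g⁻¹ * h)

/-- The special subgroup `W_T` generated by a subset `T` of the vertices. -/
def specialSubgroup (G : SimpleGraph V) (T : Set V) : Subgroup (RACG G) :=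
  Subgroup.closure (racgGen G '' T)

/-- The left coset `g W_T` as a subset of `W_Γ`. -/
def leftCosetOf (G : SimpleGraph V) (g : RACG G) (T : Set V) : Set (RACG G) :=
  (g * ·) '' (specialSubgroup G T : Set (RACG G))

/-- The `C`-neighborhood of a subset in the word metric. -/
noncomputable def nbhd (G : SimpleGraph V) (C : ℕ) (A : Set (RACG G)) : Set (RACG G) :=
  {x | ∃ a ∈ A, wdist G x a ≤ C}

/-- A subset of `W_Γ` has infinite diameter. -/
def InfDiam (G : SimpleGraph V) (A : Set (RACG G)) : Prop :=
  ∀ D : ℕ, ∃ x ∈ A, ∃ y ∈ A, D ≤ wdist G x y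

/-- Two subsets are `C`-Hausdorff close. -/
def HausCloseWith (G : SimpleGraph V) (C : ℕ) (A B : Set (RACG G)) : Prop :=
  A ⊆ nbhd G C B ∧ B ⊆ nbhd G C A

/-- Two subsets are Hausdorff close. -/
def HausClose (G : SimpleGraph V) (A B : Set (RACG G)) : Prop :=
  ∃ C : ℕ, HausCloseWith G C A B

/-- A pair of distinct non-adjacent vertices. -/
def NonAdjPair (G : SimpleGraph V) (s t : V) : Prop := s ≠ t ∧ ¬ G.Adj s t

/-- A set of vertices containing a pair of non-adjacent vertices. -/
def HasNonAdjPair (G : SimpleGraph V) (A : Set V) : Prop :=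
  ∃ s ∈ A, ∃ t ∈ A, NonAdjPair G s t

/-- `L` is the join `A ⋆ B` (on the level of vertex sets of induced subgraphs). -/
def JoinDecomp (G : SimpleGraph V) (L A B : Set V) : Prop :=
  A ∪ B = L ∧ ∀ a ∈ A, ∀ b ∈ B, G.Adj a b

/-- `L` is a join of two induced subgraphs, each containing a pair of
non-adjacent vertices. -/
def IsWidePre (G : SimpleGraph V) (L : Set V) : Prop :=
  ∃ A B : Set V, JoinDecomp G L A B ∧ HasNonAdjPair G A ∧ HasNonAdjPair G B

/-- The wide subgraphs `Ω(Γ)`: maximal joins of two induced subgraphs each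
containing a pair of non-adjacent vertices. -/
def IsWide (G : SimpleGraph V) (L : Set V) : Prop :=
  IsWidePre G L ∧ ∀ L', IsWidePre G L' → L ⊆ L' → L = L'

/-- `L = A ⋆ K` with `A` a pair of non-adjacent vertices and `K` a nonempty clique. -/
def IsStripDecomp (G : SimpleGraph V) (L A K : Set V) : Prop :=
  (∃ s t, NonAdjPair G s t ∧ A = {s, t}) ∧ K.Nonempty ∧ G.IsClique K ∧
    A ∪ K = L ∧ ∀ a ∈ A, ∀ k ∈ K, G.Adj a k

def IsStripPre (G : SimpleGraph V) (L : Set V) : Prop :=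
  ∃ A K : Set V, IsStripDecomp G L A K

/-- The strip subgraphs `Ψ(Γ)`: subgraphs of the form `A ⋆ K` as above that are
not properly contained in any wide subgraph nor in any other such subgraph. -/
def IsStrip (G : SimpleGraph V) (L : Set V) : Prop :=
  IsStripPre G L ∧ (∀ L', IsWide G L' → L ⊆ L' → L = L') ∧
    (∀ L', IsStripPre G L' → L ⊆ L' → L = L')

/-- Two hyperedges of a hypergraph intersect in a pair of non-adjacent vertices. -/
def hypStep (G : SimpleGraph V) (E : Set (Set V)) (H H' : Set V) : Prop :=
  H ∈ E ∧ H' ∈ E ∧ ∃ s t, NonAdjPair G s t ∧ s ∈ H ∩ H' ∧ t ∈ H ∩ H'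

/-- The hyperedge sets of the lambda hypergraphs `Λ_i(Γ)`. -/
def Lam (G : SimpleGraph V) : ℕ → Set (Set V)
  | 0 => {L | IsWide G L ∨ IsStrip G L}
  | (i+1) =>
      {Z | ∃ H ∈ Lam G i,
        Z = ⋃₀ {H' | H' ∈ Lam G i ∧ ReflTransGen (hypStep G (Lam G i)) H H'}}

/-- A hyperedge `H` of `Λ_i(Γ)` is a member of the hyperedge of `Λ_{i+1}(Γ)`
formed as the union of its `≡_i`-equivalence class. -/
def memberOf (G : SimpleGraph V) (i : ℕ) (H Z : Set V) : Prop :=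
  H ∈ Lam G i ∧
    Z = ⋃₀ {H' | H' ∈ Lam G i ∧ ReflTransGen (hypStep G (Lam G i)) H H'}

/-- `Γ` has hypergraph index exactly `h ∈ ℕ`. -/
def HasHypIndex (G : SimpleGraph V) (h : ℕ) : Prop :=
  (∃ L, IsWide G L) ∧ (∃ H ∈ Lam G h, Set.univ ⊆ H) ∧
    ∀ h' < h, ¬ ∃ H ∈ Lam G h', Set.univ ⊆ H

/-- The hypergraph index of `Γ` as an element of `ℕ ∪ {∞}`. -/
noncomputable def hypIndex (G : SimpleGraph V) : ℕ∞ :=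
  sInf {x : ℕ∞ | ∃ m : ℕ, x = (m : ℕ∞) ∧ (∃ L, IsWide G L) ∧
          ∃ H ∈ Lam G m, Set.univ ⊆ H}

/-- The realization `R_i(Γ)`: cosets `g W_H` for `H` a hyperedge of `Λ_i(Γ)`
whose induced subgraph is not a strip subgraph. -/
def realization (G : SimpleGraph V) (i : ℕ) : Set (Set (RACG G)) :=
  {L | ∃ (g : RACG G) (H : Set V), H ∈ Lam G i ∧ ¬ IsStrip G H ∧
        L = leftCosetOf G g H}

/-- A coset `g W_H` (with `H ∈ Λ_i`) is a member of `g' W_{H'}` (with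
`H' ∈ Λ_{i+1}`). -/
def cosetMemberOf (G : SimpleGraph V) (i : ℕ) (L L' : Set (RACG G)) : Prop :=
  ∃ (g g' : RACG G) (H H' : Set V),
    memberOf G i H H' ∧ L = leftCosetOf G g H ∧ L' = leftCosetOf G g' H' ∧ L ⊆ L'

/-- The maximal size of a clique of `Γ`. -/
noncomputable def maxCliqueSize (G : SimpleGraph V) : ℕ :=
  sSup {n : ℕ | ∃ K : Set V, G.IsClique K ∧ K.ncard = n}

/-- A combinatorial path in the Cayley graph of `W_Γ`. -/
def IsEdgePath (G : SimpleGraph V) (p : ℕ → RACG G) (n : ℕ) : Prop :=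
  ∀ k < n, wdist G (p k) (p (k+1)) ≤ 1

/-- `Y` is `C`-path connected: any two points of `Y` are joined by a path in the
Cayley graph staying in the `C`-neighborhood of `Y`. -/
def CPathConn (G : SimpleGraph V) (C : ℕ) (Y : Set (RACG G)) : Prop :=
  ∀ y₁ ∈ Y, ∀ y₂ ∈ Y, ∃ (n : ℕ) (p : ℕ → RACG G),
    p 0 = y₁ ∧ p n = y₂ ∧ IsEdgePath G p n ∧ ∀ k ≤ n, p k ∈ nbhd G C Y

/-- The coarse intersection degree of a collection `M` of subsets of `W_Γ` is at
most `d`. -/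
def CoarseIntDegLE (G : SimpleGraph V) (M : Set (Set (RACG G))) (d : ℕ) : Prop :=
  ∃ (Ms : ℕ → Set (Set (RACG G))) (P : ℕ → Set (RACG G) → Set (Set (RACG G)))
    (C : ℕ), 0 < C ∧ Ms 0 = M ∧
    (∀ i, 1 ≤ i → i ≤ d → ∀ A ∈ Ms i,
      (P i A ⊆ Ms (i-1)) ∧
      (A ⊆ ⋃ B ∈ P i A, nbhd G C B) ∧
      ((⋃ B ∈ P i A, B) ⊆ A) ∧
      (∀ A₁ ∈ P i A, ∀ A₂ ∈ P i A, ∃ (n : ℕ) (ch : ℕ → Set (RACG G)),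
        ch 0 = A₁ ∧ ch n = A₂ ∧ (∀ k ≤ n, ch k ∈ P i A) ∧
        (∀ k < n, InfDiam G (nbhd G C (ch k) ∩ ch (k+1)) ∧
          CPathConn G C (nbhd G C (ch k) ∩ ch (k+1))))) ∧
    (∃ A ∈ Ms d, ∀ B ∈ M, B ⊆ nbhd G C A)

/-- The coarse intersection degree of `M` is exactly `d`. -/
def CoarseIntDeg (G : SimpleGraph V) (M : Set (Set (RACG G))) (d : ℕ) : Prop :=
  CoarseIntDegLE G M d ∧ ∀ d' < d, ¬ CoarseIntDegLE G M d'

/-- A `(K, C)`-quasi-isometry between two right-angled Coxeter groups with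
their word metrics. -/
def IsQI {V' : Type*} (G : SimpleGraph V) (G' : SimpleGraph V') (K C : ℝ)
    (f : RACG G → RACG G') : Prop :=
  (∀ a b : RACG G,
      (1/K) * (wdist G a b : ℝ) - C ≤ (wdist G' (f a) (f b) : ℝ) ∧
      (wdist G' (f a) (f b) : ℝ) ≤ K * (wdist G a b : ℝ) + C) ∧
  (∀ y : RACG G', ∃ x : RACG G, (wdist G' y (f x) : ℝ) ≤ C)

/-- `Q` is the vertex set of an induced `4`-cycle of `Γ`. -/
def IsInducedSquare (G : SimpleGraph V) (Q : Set V) : Prop :=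
  ∃ a b c d : V, Q = {a, b, c, d} ∧
    G.Adj a b ∧ G.Adj b c ∧ G.Adj c d ∧ G.Adj d a ∧
    a ≠ c ∧ b ≠ d ∧ ¬ G.Adj a c ∧ ¬ G.Adj b d

/-- Adjacency in the square graph of `Γ`. -/
def sqAdj (G : SimpleGraph V) (Q Q' : Set V) : Prop :=
  IsInducedSquare G Q ∧ IsInducedSquare G Q' ∧ Q ≠ Q' ∧
    ∃ s t, NonAdjPair G s t ∧ s ∈ Q ∩ Q' ∧ t ∈ Q ∩ Q'

/-- `Γ` is a CFS graph. -/
def IsCFS (G : SimpleGraph V) : Prop :=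
  ∃ Om K : Set V, Om ∪ K = Set.univ ∧ G.IsClique K ∧
    (∀ o ∈ Om, ∀ k ∈ K, G.Adj o k) ∧
    ∃ Q₀, IsInducedSquare G Q₀ ∧
      ⋃₀ {Q | IsInducedSquare G Q ∧ ReflTransGen (sqAdj G) Q₀ Q} = Om

/-- Rank `n` pairs of non-adjacent vertices. -/
def IsRankPair (G : SimpleGraph V) : ℕ → V → V → Prop
  | 0, _, _ => False
  | 1, s, t => NonAdjPair G s t ∧ ¬ ∃ Q, IsInducedSquare G Q ∧ s ∈ Q ∧ t ∈ Q
  | (n+2), s, t => NonAdjPair G s t ∧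
      ((∀ s₁ ∈ G.neighborSet s, ∀ s₂ ∈ G.neighborSet s,
          NonAdjPair G s₁ s₂ → IsRankPair G (n+1) s₁ s₂) ∨
       (∀ t₁ ∈ G.neighborSet t, ∀ t₂ ∈ G.neighborSet t,
          NonAdjPair G t₁ t₂ → IsRankPair G (n+1) t₁ t₂))

/-- The hypergraph index spectrum of `W_Γ`. -/
noncomputable def hypSpectrum (G : SimpleGraph V) : Set ℕ∞ :=
  {x | ∃ T : Set V,
        (hypIndex (G.induce T) ≠ ⊤ ∧
          ∀ T' : Set V, hypIndex (G.induce T') ≠ ⊤ → T ⊆ T' → T = T') ∧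
        hypIndex (G.induce T) = x}

theorem IsWidePre.exists_isWide_superset [Finite V] {G : SimpleGraph V} {L : Set V}
    (hL : IsWidePre G L) : ∃ M, IsWide G M ∧ L ⊆ M := by
  obtain ⟨M, ⟨hM, hLM⟩, hmax⟩ := Set.Finite.exists_maximalFor id {X | IsWidePre G X ∧ L ⊆ X}
    (Set.toFinite _) ⟨L, hL, subset_rfl⟩
  exact ⟨M, ⟨hM, fun M' hM' hMM' => hMM'.antisymm (hmax ⟨hM', hLM.trans hMM'⟩ hMM')⟩, hLM⟩

namespace IsStripDecomp

variable {G : SimpleGraph V} {L A K : Set V} {v : V}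

theorem insert_union_eq (hd : IsStripDecomp G L A K) : A ∪ insert v K = insert v L := by
  rw [Set.union_insert, hd.2.2.2.1]

theorem adj_insert (hd : IsStripDecomp G L A K) (hv : ∀ a ∈ A, G.Adj a v) :
    ∀ a ∈ A, ∀ k ∈ insert v K, G.Adj a k := by
  rintro a ha k (rfl | hk)
  exacts [hv a ha, hd.2.2.2.2 a ha k hk]

theorem isStripPre_insert (hd : IsStripDecomp G L A K) (hv : ∀ a ∈ A, G.Adj a v)
    (hvK : ∀ k ∈ K, G.Adj v k) : IsStripPre G (insert v L) :=
  ⟨A, insert v K, hd.1, Set.insert_nonempty v K,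
    hd.2.2.1.insert fun k hk _ => hvK k hk, hd.insert_union_eq, hd.adj_insert hv⟩

theorem isWidePre_insert (hd : IsStripDecomp G L A K) (hv : ∀ a ∈ A, G.Adj a v)
    {k : V} (hk : k ∈ K) (hvk : NonAdjPair G v k) : IsWidePre G (insert v L) := by
  obtain ⟨s, t, hst, rfl⟩ := hd.1
  exact ⟨{s, t}, insert v K, ⟨hd.insert_union_eq, hd.adj_insert hv⟩,
    ⟨s, by simp, t, by simp, hst⟩, ⟨v, Set.mem_insert v K, k, Set.mem_insert_of_mem v hk, hvk⟩⟩

end IsStripDecomp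

namespace IsStrip

variable {G : SimpleGraph V} {L A K : Set V}

theorem mem_of_forall_adj [Finite V] (hL : IsStrip G L) (hd : IsStripDecomp G L A K) {v : V}
    (hv : ∀ a ∈ A, G.Adj a v) : v ∈ L := by
  by_contra hvL
  by_cases hvK : ∀ k ∈ K, G.Adj v k
  · exact hvL (hL.2.2 _ (hd.isStripPre_insert hv hvK) (Set.subset_insert v L) ▸ Set.mem_insert v L)
  · obtain ⟨k, hk, hvk⟩ : ∃ k ∈ K, ¬ G.Adj v k := by simpa using hvK
    have hkL : k ∈ L := hd.2.2.2.1 ▸ Set.mem_union_right A hk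
    have hvk' : NonAdjPair G v k := ⟨fun h => hvL (h ▸ hkL), hvk⟩
    obtain ⟨M, hM, hvLM⟩ := (hd.isWidePre_insert hv hk hvk').exists_isWide_superset
    exact hvL (hL.2.1 M hM ((Set.subset_insert v L).trans hvLM) ▸ hvLM (Set.mem_insert v L))

theorem subset_of_isStripDecomp [Finite V] (hL : IsStrip G L) (hd : IsStripDecomp G L A K)
    {L' K' : Set V} (hd' : IsStripDecomp G L' A K') : L' ⊆ L := by
  rw [← hd'.2.2.2.1]
  refine Set.union_subset (hd.2.2.2.1 ▸ Set.subset_union_left) fun k hk => ?_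
  exact hL.mem_of_forall_adj hd fun a ha => hd'.2.2.2.2 a ha k hk

end IsStrip

/-- distinct strip subgraphs `L = A ⋆ K` and `L' = A' ⋆ K'` have
distinct non-clique factors: `A ≠ A'`. -/
theorem strip_pairs_distinct [Finite V] (G : SimpleGraph V)
    (L L' A K A' K' : Set V)
    (hL : IsStrip G L) (hL' : IsStrip G L') (hne : L ≠ L')
    (hd : IsStripDecomp G L A K) (hd' : IsStripDecomp G L' A' K') :
    A ≠ A' := by
  rintro rfl
  exact hne (hL'.2.2 L ⟨A, K, hd⟩ (hL.subset_of_isStripDecomp hd hd')).symm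
end

section
/- Let Γ be a finite simplicial graph, let u and v be distinct non-adjacent vertices of Γ, and let H ⊆ V(Γ) be a subset with v ∉ H. Then for every positive integer n and for all x ∈ W_H and y ∈ (uv)ⁿW_H, the word-metric distance satisfies d(x,y) ≥ n; that is, the cosets W_H and (uv)ⁿW_H are at distance at least n apart in W_Γ. -/
open Relation

variable {V : Type*}

/-!
The infinite dihedral group acts on `ℝ` by isometries, `u` as the reflection in `0`, `v` as the
reflection in `1` and every other generator trivially; this respects the relations because `u`
and `v` are not adjacent. Every generator moves `0` by at most `2`, so the orbit map `g ↦ g • 0`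
is `2`-Lipschitz for the word metric. The special subgroup `W_H` fixes `0` since `v ∉ H`, while
`(uv)ⁿ` is the translation by `-2n`; hence `x • 0 = 0` and `y • 0 = -2n`, forcing
`d(x, y) ≥ n`.
-/

section RACG

variable {G : SimpleGraph V}

theorem racgGen_mul_self (s : V) : racgGen G s * racgGen G s = 1 :=
  (QuotientGroup.eq_one_iff _).2 (Subgroup.subset_normalClosure (Or.inl ⟨s, rfl⟩))

variable (G) in
def racgLift {K : Type*} [Group K] (f : V → K) (hsq : ∀ s, f s * f s = 1)
    (hcomm : ∀ s t, G.Adj s t → Commute (f s) (f t)) : RACG G →* K :=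
  PresentedGroup.toGroup (f := f) <| by
    rintro r (⟨s, rfl⟩ | ⟨s, t, hst, rfl⟩)
    · simp [hsq]
    · simp only [map_mul, FreeGroup.lift_apply_of]
      rw [mul_assoc (f s), ← (hcomm s t hst).eq, ← mul_assoc, hsq, one_mul, hsq]

@[simp]
theorem racgLift_racgGen {K : Type*} [Group K] (f : V → K) (hsq : ∀ s, f s * f s = 1)
    (hcomm : ∀ s t, G.Adj s t → Commute (f s) (f t)) (s : V) :
    racgLift G f hsq hcomm (racgGen G s) = f s :=
  PresentedGroup.toGroup.of _

theorem exists_list_map_racgGen_prod_eq (g : RACG G) :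
    ∃ l : List V, (l.map (racgGen G)).prod = g := by
  obtain ⟨w, rfl⟩ := PresentedGroup.mk_surjective (racgRels G) g
  induction w using FreeGroup.induction_on with
  | C1 => exact ⟨[], rfl⟩
  | of s => exact ⟨[s], mul_one _⟩
  | inv_of s _ =>
    exact ⟨[s], (mul_one _).trans (eq_inv_of_mul_eq_one_left (racgGen_mul_self s))⟩
  | mul a b ha hb =>
    obtain ⟨la, hla⟩ := ha
    obtain ⟨lb, hlb⟩ := hb
    exact ⟨la ++ lb, by simp [hla, hlb]⟩

theorem exists_list_length_eq_wordLength (g : RACG G) :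
    ∃ l : List V, l.length = wordLength G g ∧ (l.map (racgGen G)).prod = g := by
  obtain ⟨l, hl⟩ := exists_list_map_racgGen_prod_eq g
  exact Nat.sInf_mem (s := {n | ∃ l : List V, l.length = n ∧ (l.map (racgGen G)).prod = g})
    ⟨l.length, l, rfl, hl⟩

theorem apply_eq_self_of_mem_specialSubgroup {α : Type*} [PseudoMetricSpace α]
    (φ : RACG G →* (α ≃ᵢ α)) {p : α} {T : Set V}
    (hfix : ∀ s ∈ T, φ (racgGen G s) p = p)
    {g : RACG G} (hg : g ∈ specialSubgroup G T) : φ g p = p := by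
  induction hg using Subgroup.closure_induction with
  | mem _ hs => obtain ⟨s, hs, rfl⟩ := hs; exact hfix s hs
  | one => simp
  | mul a b _ _ ha hb => rw [map_mul, IsometryEquiv.mul_apply, hb, ha]
  | inv a _ ha => rw [map_inv, ← ha, IsometryEquiv.inv_apply_self, ha]

section Lipschitz

variable {α : Type*} [PseudoMetricSpace α] (φ : RACG G →* (α ≃ᵢ α)) {p : α} {c : ℝ}

theorem dist_list_prod_apply_le (hc : ∀ s, dist (φ (racgGen G s) p) p ≤ c) (l : List V) :
    dist (φ (l.map (racgGen G)).prod p) p ≤ c * l.length := by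
  induction l with
  | nil => simp
  | cons s l ih =>
    set q := φ (l.map (racgGen G)).prod p
    rw [List.map_cons, List.prod_cons, map_mul, IsometryEquiv.mul_apply]
    calc dist (φ (racgGen G s) q) p
        ≤ dist (φ (racgGen G s) q) (φ (racgGen G s) p) + dist (φ (racgGen G s) p) p :=
          dist_triangle _ _ _
      _ = dist q p + dist (φ (racgGen G s) p) p := by rw [IsometryEquiv.dist_eq]
      _ ≤ c * (l.length + 1) := by linarith [hc s]
      _ = c * (s :: l).length := by simp

theorem dist_apply_le_mul_wdist (hc : ∀ s, dist (φ (racgGen G s) p) p ≤ c) (g h : RACG G) :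
    dist (φ g p) (φ h p) ≤ c * wdist G g h := by
  obtain ⟨l, hlen, hl⟩ := exists_list_length_eq_wordLength (g⁻¹ * h)
  calc dist (φ g p) (φ h p) = dist p (φ (g⁻¹ * h) p) := by
        rw [← (φ g).dist_eq p, ← IsometryEquiv.mul_apply, ← map_mul, mul_inv_cancel_left]
    _ = dist (φ (l.map (racgGen G)).prod p) p := by rw [hl, dist_comm]
    _ ≤ c * wdist G g h := by rw [wdist, ← hlen]; exact dist_list_prod_apply_le φ hc l

end Lipschitz

end RACG

section Dihedral

noncomputable abbrev reflectionAt (x : ℝ) : ℝ ≃ᵢ ℝ :=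
  (AffineIsometryEquiv.pointReflection ℝ x).toIsometryEquiv

theorem reflectionAt_apply (x p : ℝ) : reflectionAt x p = 2 * x - p := by
  simp [AffineIsometryEquiv.pointReflection_apply]
  ring

theorem reflectionAt_mul_self (x : ℝ) : reflectionAt x * reflectionAt x = 1 := by
  ext p
  simp [IsometryEquiv.mul_apply, reflectionAt_apply]

open Classical in
noncomputable def dihedralImage (u v s : V) : ℝ ≃ᵢ ℝ :=
  if s = u then reflectionAt 0 else if s = v then reflectionAt 1 else 1

theorem dihedralImage_mul_self (u v s : V) : dihedralImage u v s * dihedralImage u v s = 1 := by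
  unfold dihedralImage
  split_ifs <;> simp [reflectionAt_mul_self]

theorem dihedralImage_eq_one {u v s : V} (hu : s ≠ u) (hv : s ≠ v) :
    dihedralImage u v s = 1 := by
  simp [dihedralImage, hu, hv]

theorem dihedralImage_eq_one_or_of_adj {G : SimpleGraph V} {u v : V} (hadj : ¬ G.Adj u v) {s t : V}
    (hst : G.Adj s t) : dihedralImage u v s = 1 ∨ dihedralImage u v t = 1 := by
  by_cases hsu : s = u
  · subst hsu
    exact .inr <| dihedralImage_eq_one (fun h => hst.ne h.symm) (fun h => hadj (h ▸ hst))
  by_cases hsv : s = v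
  · subst hsv
    exact .inr <| dihedralImage_eq_one (fun h => hadj (h ▸ hst.symm)) (fun h => hst.ne h.symm)
  exact .inl (dihedralImage_eq_one hsu hsv)

noncomputable def dihedralAction (G : SimpleGraph V) {u v : V} (hadj : ¬ G.Adj u v) :
    RACG G →* (ℝ ≃ᵢ ℝ) :=
  racgLift G (dihedralImage u v) (dihedralImage_mul_self u v) fun _ _ hst =>
    (dihedralImage_eq_one_or_of_adj hadj hst).elim (fun h => h ▸ Commute.one_left _)
      (fun h => h ▸ Commute.one_right _)

variable {G : SimpleGraph V} {u v : V} (hadj : ¬ G.Adj u v)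

theorem dist_dihedralAction_racgGen_zero_le (s : V) :
    dist (dihedralAction G hadj (racgGen G s) 0) 0 ≤ 2 := by
  simp only [dihedralAction, racgLift_racgGen, dihedralImage]
  split_ifs <;> norm_num [reflectionAt_apply]

theorem dihedralAction_racgGen_zero_of_ne {s : V} (hs : s ≠ v) :
    dihedralAction G hadj (racgGen G s) 0 = 0 := by
  simp only [dihedralAction, racgLift_racgGen, dihedralImage, if_neg hs]
  split_ifs <;> simp [reflectionAt_apply]

theorem dihedralAction_pow_apply (huv : u ≠ v) (n : ℕ) (p : ℝ) :
    dihedralAction G hadj ((racgGen G u * racgGen G v) ^ n) p = p - 2 * n := by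
  induction n generalizing p with
  | zero => simp
  | succ n ih =>
    rw [pow_succ, map_mul, IsometryEquiv.mul_apply, ih]
    simp [dihedralAction, dihedralImage, huv.symm, IsometryEquiv.mul_apply, reflectionAt_apply]
    ring

end Dihedral

theorem coset_distance_lower_bound_general (G : SimpleGraph V) (u v : V)
    (huv : u ≠ v) (hadj : ¬ G.Adj u v) (H : Set V) (hv : v ∉ H)
    (n : ℕ) (x y : RACG G)
    (hx : x ∈ specialSubgroup G H)
    (hy : y ∈ leftCosetOf G ((racgGen G u * racgGen G v) ^ n) H) :
    n ≤ wdist G x y := by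
  obtain ⟨a, ha, rfl⟩ := hy
  set φ := dihedralAction G hadj
  have hfix : ∀ s ∈ H, φ (racgGen G s) 0 = 0 := fun s hs =>
    dihedralAction_racgGen_zero_of_ne hadj (ne_of_mem_of_not_mem hs hv)
  have hx0 : φ x 0 = 0 := apply_eq_self_of_mem_specialSubgroup φ hfix hx
  have hy0 : φ ((racgGen G u * racgGen G v) ^ n * a) 0 = -(2 * n) := by
    rw [map_mul, IsometryEquiv.mul_apply, apply_eq_self_of_mem_specialSubgroup φ hfix ha,
      dihedralAction_pow_apply hadj huv]
    ring
  have hlip := dist_apply_le_mul_wdist φ (dist_dihedralAction_racgGen_zero_le hadj) x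
    ((racgGen G u * racgGen G v) ^ n * a)
  rw [hx0, hy0, Real.dist_eq, zero_sub, neg_neg, abs_of_nonneg (by positivity)] at hlip
  exact_mod_cast le_of_mul_le_mul_left hlip two_pos

/-- for distinct non-adjacent vertices `u, v` and `H ⊆ V(Γ)` with
`v ∉ H`, the cosets `W_H` and `(uv)ⁿ W_H` are at distance at least `n`. -/
theorem coset_distance_lower_bound [Finite V] (G : SimpleGraph V) (u v : V)
    (huv : u ≠ v) (hadj : ¬ G.Adj u v) (H : Set V) (hv : v ∉ H)
    (n : ℕ) (hn : 0 < n) (x y : RACG G)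
    (hx : x ∈ specialSubgroup G H)
    (hy : y ∈ leftCosetOf G ((racgGen G u * racgGen G v) ^ n) H) :
    n ≤ wdist G x y :=
  coset_distance_lower_bound_general G u v huv hadj H hv n x y hx hy
end
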